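/- (Lemma 1: each data source is sampled Ω(log t) times.) Under the ε(t)-greedy selection policy, for any finite constant c₁ > 0, if the policy constant satisfies C ≥ K(c₁ + 40K) + 4K√(5K(c₁ + 20K)), then setting A := C/K − c₁ and B := (C/K)(log C − 1), for every data source k ∈ {1,…,K} and every t > T₁ := max{C + 1, 2, exp(2B/A)}, one has P(N_{k,t} < c₁ log t) ≤ 2/t⁵; this holds under both the global null and the global alternative. -/

import Mathlib

/-!
Let `Y s` be the indicator that source `k` is selected at round `s`, so `N_{k,t} = ∑_{s ≤ t} Y s`.
The policy explores uniformly with probability `ε(s)`, hence `E[Y s | F_{s-1}] ≥ ε(s) / K`.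
For `u = 1 - e^{-λ}` the products `∏_{s ≤ n} (1 - u Y s) = e^{-λ N_{k,n}}` therefore satisfy
`E[e^{-λ N_{k,t}}] ≤ ∏_{s ≤ t} (1 - u ε(s) / K) ≤ exp (-u ∑_{s ≤ t} ε(s) / K)`, one conditional
expectation at a time, and Markov's inequality bounds `P(N_{k,t} ≤ c₁ log t)` by
`exp (λ c₁ log t - u ∑ ε(s) / K)`. The exploration budget `∑_{s ≤ t} ε(s)` is at least
`C log t - C log C + C - 2`; with `A = C/K - c₁` and `λ = log ((A + 2c₁) / (2c₁))`, the lower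
bound on `C` and `t > T₁` make the exponent at most `-5 log t`.
-/

open MeasureTheory ProbabilityTheory Filter Set Topology

noncomputable section

namespace ASN2T

open Classical in
/-- Real-valued indicator of a proposition. -/
def indi (p : Prop) : ℝ := if p then 1 else 0

variable {Ω 𝒳 : Type*}

/-- `v X1 X2 k t g ω = g (X_{k,1}(t)) - g (X_{k,2}(t))`. -/
def v {K : ℕ} (X1 X2 : Fin K → ℕ → Ω → 𝒳) (k : Fin K) (t : ℕ) (g : 𝒳 → ℝ) (ω : Ω) : ℝ :=
  g (X1 k t ω) - g (X2 k t ω)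

/-- The observed increment `v_t^{(δ_t)}(g_{δ_t,t})`. -/
def vsel {K : ℕ} (X1 X2 : Fin K → ℕ → Ω → 𝒳) (δ : ℕ → Ω → Fin K)
    (gpred : Fin K → ℕ → Ω → 𝒳 → ℝ) (t : ℕ) (ω : Ω) : ℝ :=
  v X1 X2 (δ t ω) t (gpred (δ t ω) t ω) ω

/-- `N_{k,t}`, the number of times source `k` is selected up to time `t` (as a real number). -/
def Ncount {K : ℕ} (δ : ℕ → Ω → Fin K) (k : Fin K) (t : ℕ) (ω : Ω) : ℝ :=
  ∑ s ∈ Finset.Icc 1 t, indi (δ s ω = k)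

/-- The running average `μ̂_{k,t}` (with the convention `0 / 0 = 0`). -/
def muhat {K : ℕ} (X1 X2 : Fin K → ℕ → Ω → 𝒳) (δ : ℕ → Ω → Fin K)
    (gpred : Fin K → ℕ → Ω → 𝒳 → ℝ) (k : Fin K) (t : ℕ) (ω : Ω) : ℝ :=
  (∑ s ∈ Finset.Icc 1 t, indi (δ s ω = k) * v X1 X2 k s (gpred k s ω) ω) / Ncount δ k t ω

/-- The individual regret `R_t^{(k)}` of the prediction strategy on source `k`. -/
def regret {K : ℕ} (X1 X2 : Fin K → ℕ → Ω → 𝒳) (δ : ℕ → Ω → Fin K)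
    (gpred : Fin K → ℕ → Ω → 𝒳 → ℝ) (G : Set (𝒳 → ℝ)) (k : Fin K) (t : ℕ) (ω : Ω) : ℝ :=
  sSup ((fun g => ∑ s ∈ Finset.Icc 1 t, indi (δ s ω = k) * v X1 X2 k s g ω) '' G)
    - ∑ s ∈ Finset.Icc 1 t, indi (δ s ω = k) * v X1 X2 k s (gpred k s ω) ω

/-- The exploration rate `ε(t) = min {1, C/t}`. -/
def eps (C : ℝ) (t : ℕ) : ℝ := min 1 (C / t)

variable [m𝒳 : MeasurableSpace 𝒳]

/-- `D_𝒢^{(k)} = sup_{g ∈ 𝒢} (E_{P_{k,1}}[g] - E_{P_{k,2}}[g])`. -/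
def DG {K : ℕ} (P1 P2 : Fin K → Measure 𝒳) (G : Set (𝒳 → ℝ)) (k : Fin K) : ℝ :=
  sSup ((fun g => (∫ x, g x ∂P1 k) - ∫ x, g x ∂P2 k) '' G)

/-- `σ_k² = sup_{g ∈ 𝒢} Var(g(X_{k,1}) - g(X_{k,2}))` with `(X_{k,1}, X_{k,2}) ∼ P_{k,1} × P_{k,2}`. -/
def sigmaSq {K : ℕ} (P1 P2 : Fin K → Measure 𝒳) (G : Set (𝒳 → ℝ)) (k : Fin K) : ℝ :=
  sSup ((fun g => variance (fun p : 𝒳 × 𝒳 => g p.1 - g p.2) ((P1 k).prod (P2 k))) '' G)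

/-- `σ_k = √(σ_k²)`. -/
def sigmaG {K : ℕ} (P1 P2 : Fin K → Measure 𝒳) (G : Set (𝒳 → ℝ)) (k : Fin K) : ℝ :=
  Real.sqrt (sigmaSq P1 P2 G k)

/-- `σ̃_k² = sup_{g ∈ 𝒢} E[(g(X_{k,1}) - g(X_{k,2}))²]`. -/
def sigmaTildeSq {K : ℕ} (P1 P2 : Fin K → Measure 𝒳) (G : Set (𝒳 → ℝ)) (k : Fin K) : ℝ :=
  sSup ((fun g => ∫ p : 𝒳 × 𝒳, (g p.1 - g p.2) ^ 2 ∂(P1 k).prod (P2 k)) '' G)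

/-- `γ_k = sup_{g ∈ 𝒢} Var((g(X_{k,1}) - g(X_{k,2}))²)`. -/
def gammaG {K : ℕ} (P1 P2 : Fin K → Measure 𝒳) (G : Set (𝒳 → ℝ)) (k : Fin K) : ℝ :=
  sSup ((fun g => variance (fun p : 𝒳 × 𝒳 => (g p.1 - g p.2) ^ 2) ((P1 k).prod (P2 k))) '' G)

lemma indi_eq_zero_or_one (p : Prop) : indi p = 0 ∨ indi p = 1 := by
  unfold indi; split_ifs <;> simp

lemma indi_nonneg (p : Prop) : 0 ≤ indi p := by
  rcases indi_eq_zero_or_one p with h | h <;> simp [h]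

lemma stronglyMeasurable_indi {m : MeasurableSpace Ω} {p : Ω → Prop}
    (hp : MeasurableSet[m] {ω | p ω}) : StronglyMeasurable[m] fun ω => indi (p ω) := by
  classical
  have h : (fun ω => indi (p ω)) = {ω | p ω}.indicator 1 := by
    funext ω; by_cases h : p ω <;> simp [indi, h]
  rw [h]
  exact stronglyMeasurable_const.indicator hp

section Supermartingale

variable {m m₀ : MeasurableSpace Ω} {μ : Measure Ω}

lemma integral_mul_one_sub_mul_le [IsFiniteMeasure μ] (hm : m ≤ m₀) {G Y : Ω → ℝ} {q u : ℝ}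
    (hG : StronglyMeasurable[m] G) (hG0 : ∀ ω, 0 ≤ G ω) (hG1 : ∀ ω, G ω ≤ 1)
    (hY : Integrable Y μ) (hu : 0 ≤ u) (hq : ∀ᵐ ω ∂μ, q ≤ μ[Y|m] ω) :
    ∫ ω, G ω * (1 - u * Y ω) ∂μ ≤ (1 - u * q) * ∫ ω, G ω ∂μ := by
  have hGbdd : ∀ᵐ ω ∂μ, ‖G ω‖ ≤ 1 := ae_of_all _ fun ω => by
    rw [Real.norm_eq_abs, abs_le]; exact ⟨by linarith [hG0 ω], hG1 ω⟩
  have hGm : AEStronglyMeasurable G μ := (hG.mono hm).aestronglyMeasurable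
  have hGint : Integrable G μ := (integrable_const 1).mono' hGm hGbdd
  have hGY : Integrable (fun ω => G ω * Y ω) μ := hY.bdd_mul hGm hGbdd
  have hpull : ∫ ω, G ω * Y ω ∂μ = ∫ ω, G ω * μ[Y|m] ω ∂μ :=
    (integral_condExp hm).symm.trans
      (integral_congr_ae (condExp_mul_of_stronglyMeasurable_left hG hGY hY))
  have hlow : q * ∫ ω, G ω ∂μ ≤ ∫ ω, G ω * Y ω ∂μ := by
    rw [hpull, ← integral_const_mul]
    refine integral_mono_ae (hGint.const_mul q) (integrable_condExp.bdd_mul hGm hGbdd) ?_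
    filter_upwards [hq] with ω hω
    nlinarith [hG0 ω]
  calc ∫ ω, G ω * (1 - u * Y ω) ∂μ = ∫ ω, G ω ∂μ - u * ∫ ω, G ω * Y ω ∂μ := by
        rw [← integral_const_mul, ← integral_sub hGint (hGY.const_mul u)]
        congr 1; funext ω; ring
    _ ≤ (1 - u * q) * ∫ ω, G ω ∂μ := by nlinarith

lemma integral_prod_one_sub_mul_le [IsProbabilityMeasure μ] (ℱ : Filtration ℕ m₀)
    {Y : ℕ → Ω → ℝ} {q : ℕ → ℝ} {u : ℝ} (hY : StronglyAdapted ℱ Y)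
    (hY0 : ∀ s ω, 0 ≤ Y s ω) (hY1 : ∀ s ω, Y s ω ≤ 1) (hq1 : ∀ s, q s ≤ 1)
    (hu0 : 0 ≤ u) (hu1 : u ≤ 1) (hq : ∀ n, ∀ᵐ ω ∂μ, q (n + 1) ≤ μ[Y (n + 1)|ℱ n] ω) (n : ℕ) :
    ∫ ω, ∏ s ∈ Finset.Icc 1 n, (1 - u * Y s ω) ∂μ ≤ ∏ s ∈ Finset.Icc 1 n, (1 - u * q s) := by
  have hfac0 : ∀ s ω, 0 ≤ 1 - u * Y s ω := fun s ω => by nlinarith [hY1 s ω, hY0 s ω]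
  have hfac1 : ∀ s ω, 1 - u * Y s ω ≤ 1 := fun s ω => by nlinarith [hY0 s ω]
  induction n with
  | zero => simp
  | succ n ih =>
    have hG : StronglyMeasurable[ℱ n] fun ω => ∏ s ∈ Finset.Icc 1 n, (1 - u * Y s ω) :=
      Finset.stronglyMeasurable_fun_prod _ fun s hs =>
        stronglyMeasurable_const.sub (stronglyMeasurable_const.mul
          ((hY s).mono (ℱ.mono (Finset.mem_Icc.mp hs).2)))
    have hYint : Integrable (Y (n + 1)) μ :=
      (integrable_const 1).mono' ((hY (n + 1)).mono (ℱ.le _)).aestronglyMeasurable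
        (ae_of_all _ fun ω => by
          rw [Real.norm_eq_abs, abs_le]; exact ⟨by linarith [hY0 (n + 1) ω], hY1 (n + 1) ω⟩)
    have hstep := integral_mul_one_sub_mul_le (ℱ.le n) hG
      (fun ω => Finset.prod_nonneg fun s _ => hfac0 s ω)
      (fun ω => Finset.prod_le_one (fun s _ => hfac0 s ω) fun s _ => hfac1 s ω) hYint hu0 (hq n)
    have hq0 : 0 ≤ 1 - u * q (n + 1) := by nlinarith [hq1 (n + 1)]
    simp only [Finset.prod_Icc_succ_top (Nat.le_add_left 1 n)]
    calc _ ≤ (1 - u * q (n + 1)) * ∫ ω, ∏ s ∈ Finset.Icc 1 n, (1 - u * Y s ω) ∂μ := hstep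
      _ ≤ _ := by rw [mul_comm]; exact mul_le_mul_of_nonneg_right ih hq0

end Supermartingale

lemma prod_one_sub_le_exp_neg_sum {ι : Type*} (s : Finset ι) {x : ι → ℝ} (hx : ∀ i ∈ s, x i ≤ 1) :
    ∏ i ∈ s, (1 - x i) ≤ Real.exp (-∑ i ∈ s, x i) := by
  rw [← Finset.sum_neg_distrib, Real.exp_sum]
  exact Finset.prod_le_prod (fun i hi => sub_nonneg.mpr (hx i hi))
    fun i _ => Real.one_sub_le_exp_neg (x i)

lemma measureReal_sum_le_le_exp {m₀ : MeasurableSpace Ω} {μ : Measure Ω} [IsProbabilityMeasure μ]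
    (ℱ : Filtration ℕ m₀) {Y : ℕ → Ω → ℝ} {q : ℕ → ℝ} (hY : StronglyAdapted ℱ Y)
    (hY01 : ∀ s ω, Y s ω = 0 ∨ Y s ω = 1) (hq1 : ∀ s, q s ≤ 1)
    (hq : ∀ n, ∀ᵐ ω ∂μ, q (n + 1) ≤ μ[Y (n + 1)|ℱ n] ω) {lam : ℝ} (hlam : 0 ≤ lam) (a : ℝ)
    (n : ℕ) :
    μ.real {ω | ∑ s ∈ Finset.Icc 1 n, Y s ω ≤ a}
      ≤ Real.exp (lam * a - (1 - Real.exp (-lam)) * ∑ s ∈ Finset.Icc 1 n, q s) := by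
  set u := 1 - Real.exp (-lam)
  have hu0 : 0 ≤ u := sub_nonneg.mpr (Real.exp_le_one_iff.mpr (neg_nonpos.mpr hlam))
  have hu1 : u ≤ 1 := sub_le_self _ (Real.exp_pos _).le
  have hY0 : ∀ s ω, 0 ≤ Y s ω := fun s ω => by rcases hY01 s ω with h | h <;> simp [h]
  have hY1 : ∀ s ω, Y s ω ≤ 1 := fun s ω => by rcases hY01 s ω with h | h <;> simp [h]
  -- on `{0, 1}` the map `y ↦ exp (-lam * y)` is affine
  have hexp : ∀ ω, Real.exp (-lam * ∑ s ∈ Finset.Icc 1 n, Y s ω)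
      = ∏ s ∈ Finset.Icc 1 n, (1 - u * Y s ω) := fun ω => by
    rw [Finset.mul_sum, Real.exp_sum]
    refine Finset.prod_congr rfl fun s _ => ?_
    rcases hY01 s ω with h | h <;> simp [h, u]
  have hint : Integrable (fun ω => Real.exp (-lam * ∑ s ∈ Finset.Icc 1 n, Y s ω)) μ := by
    have hYm : ∀ s, Measurable (Y s) := fun s => ((hY s).mono (ℱ.le s)).measurable
    refine Integrable.of_bound (by fun_prop) 1 (ae_of_all _ fun ω => ?_)
    rw [hexp, Real.norm_of_nonneg (Finset.prod_nonneg fun s _ => by nlinarith [hY1 s ω])]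
    exact Finset.prod_le_one (fun s _ => by nlinarith [hY1 s ω]) fun s _ => by nlinarith [hY0 s ω]
  have hq1' : ∀ s ∈ Finset.Icc 1 n, u * q s ≤ 1 := fun s _ => by nlinarith [hq1 s]
  calc μ.real {ω | ∑ s ∈ Finset.Icc 1 n, Y s ω ≤ a}
      ≤ Real.exp (lam * a) * mgf (fun ω => ∑ s ∈ Finset.Icc 1 n, Y s ω) μ (-lam) := by
        simpa using measure_le_le_exp_mul_mgf a (neg_nonpos.mpr hlam) hint
    _ ≤ Real.exp (lam * a) * ∏ s ∈ Finset.Icc 1 n, (1 - u * q s) := by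
        rw [mgf, integral_congr_ae (ae_of_all _ hexp)]
        gcongr
        exact integral_prod_one_sub_mul_le ℱ hY hY0 hY1 hq1 hu0 hu1 hq n
    _ ≤ Real.exp (lam * a) * Real.exp (-∑ s ∈ Finset.Icc 1 n, u * q s) := by
        gcongr; exact prod_one_sub_le_exp_neg_sum _ hq1'
    _ = _ := by rw [← Real.exp_add, ← Finset.mul_sum]; ring_nf

section Exploration

variable {C : ℝ}

lemma eps_le_one (t : ℕ) : eps C t ≤ 1 := min_le_left _ _

lemma eps_eq_one {s : ℕ} (hs : 0 < s) (hsC : (s : ℝ) ≤ C) : eps C s = 1 :=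
  min_eq_left ((one_le_div (by exact_mod_cast hs)).mpr hsC)

lemma eps_eq_div {s : ℕ} (hs : 0 < s) (hCs : C ≤ s) : eps C s = C / s :=
  min_eq_right ((div_le_one (by exact_mod_cast hs)).mpr hCs)

lemma log_add_one_sub_log_le {x : ℝ} (hx : 0 < x) : Real.log (x + 1) - Real.log x ≤ x⁻¹ := by
  rw [← Real.log_div (by positivity) hx.ne']
  have hsub : (x + 1) / x - 1 = x⁻¹ := by field_simp; ring
  linarith [Real.log_le_sub_one_of_pos (show 0 < (x + 1) / x by positivity)]

lemma sum_Ioc_log_add_one_sub_log {m t : ℕ} (hmt : m ≤ t) :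
    ∑ s ∈ Finset.Ioc m t, (Real.log (s + 1) - Real.log s)
      = Real.log (t + 1) - Real.log (m + 1) := by
  induction t, hmt using Nat.le_induction with
  | base => simp
  | succ t hmt ih => rw [Finset.sum_Ioc_succ_top hmt, ih]; push_cast; ring

/-- The exploration budget: the first `⌊C⌋` rounds contribute `⌊C⌋ > C - 1`, the remaining ones
at least `C (log (t + 1) - log (⌊C⌋ + 1))` by comparison with `log`. -/
lemma sum_eps_ge (hC : 0 < C) {t : ℕ} (ht : C + 1 < t) :
    C * Real.log t - C * Real.log C + C - 2 ≤ ∑ s ∈ Finset.Icc 1 t, eps C s := by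
  set m := ⌊C⌋₊
  have hmC : (m : ℝ) ≤ C := Nat.floor_le hC.le
  have hCm : C < m + 1 := Nat.lt_floor_add_one C
  have hmt : m ≤ t := by exact_mod_cast (show (m : ℝ) ≤ t by linarith)
  have hhead : ∑ s ∈ Finset.Ioc 0 m, eps C s = m := by
    rw [Finset.sum_congr rfl fun s hs => eps_eq_one (Finset.mem_Ioc.mp hs).1
      (le_trans (by exact_mod_cast (Finset.mem_Ioc.mp hs).2) hmC)]
    simp
  have htail : C * (Real.log (t + 1) - Real.log (m + 1)) ≤ ∑ s ∈ Finset.Ioc m t, eps C s := by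
    rw [← sum_Ioc_log_add_one_sub_log hmt, Finset.mul_sum]
    refine Finset.sum_le_sum fun s hs => ?_
    have hms : (m : ℝ) + 1 ≤ s := by exact_mod_cast (Finset.mem_Ioc.mp hs).1
    rw [eps_eq_div (Nat.zero_lt_of_lt (Finset.mem_Ioc.mp hs).1) (by linarith), div_eq_mul_inv]
    exact mul_le_mul_of_nonneg_left (log_add_one_sub_log_le (by linarith)) hC.le
  have hlog_t : Real.log t ≤ Real.log (t + 1) := Real.log_le_log (by linarith) (by linarith)
  have hlog_m : Real.log (m + 1) ≤ Real.log C + C⁻¹ := by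
    have := log_add_one_sub_log_le hC
    linarith [Real.log_le_log (by positivity) (show (m : ℝ) + 1 ≤ C + 1 by linarith)]
  have hCinv : C * (Real.log C + C⁻¹) = C * Real.log C + 1 := by field_simp
  rw [show Finset.Icc 1 t = Finset.Ioc 0 t by ext; simp; omega,
    ← Finset.sum_Ioc_consecutive _ (Nat.zero_le m) hmt, hhead]
  nlinarith

end Exploration

lemma policy_constant_bounds {K c₁ C : ℝ} (hK : 2 ≤ K) (hc₁ : 0 < c₁)
    (hC : K * (c₁ + 40 * K) + 4 * K * Real.sqrt (5 * K * (c₁ + 20 * K)) ≤ C) :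
    80 ≤ C / K - c₁ ∧ 24 * (C / K - c₁) + 48 * c₁ ≤ (C / K - c₁) ^ 2 := by
  set y := Real.sqrt (5 * K * (c₁ + 20 * K))
  have hy0 : 0 ≤ y := Real.sqrt_nonneg _
  have hy2 : y ^ 2 = 5 * K * (c₁ + 20 * K) := Real.sq_sqrt (by positivity)
  have hA : 40 * K + 4 * y ≤ C / K - c₁ := by
    rw [le_sub_iff_add_le, le_div_iff₀ (by linarith)]; linarith
  have hA80 : 80 ≤ C / K - c₁ := by linarith
  refine ⟨hA80, ?_⟩
  nlinarith [mul_le_mul hA hA (by positivity) (by linarith), mul_nonneg (sub_nonneg.mpr hK) hc₁.le]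

lemma log_le_sub_inv_div_two {x : ℝ} (hx : 1 ≤ x) : Real.log x ≤ (x - x⁻¹) / 2 := by
  rcases hx.eq_or_lt with rfl | hx
  · simp
  have h := Real.self_lt_sinh_iff.mpr (Real.log_pos hx)
  rw [Real.sinh_eq, Real.exp_neg, Real.exp_log (by linarith)] at h
  exact h.le

lemma mul_log_le_half_sub_six {A c : ℝ} (hc : 0 < c) (hA : 0 < A) (hAc : 24 * A + 48 * c ≤ A ^ 2) :
    c * Real.log ((A + 2 * c) / (2 * c)) ≤ A / 2 - 6 := by
  have hlog := log_le_sub_inv_div_two (show 1 ≤ (A + 2 * c) / (2 * c) by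
    rw [le_div_iff₀ (by positivity)]; linarith)
  have hval : c * (((A + 2 * c) / (2 * c) - ((A + 2 * c) / (2 * c))⁻¹) / 2)
      = A / 2 - 6 - (A ^ 2 - 24 * A - 48 * c) / (4 * (A + 2 * c)) := by
    field_simp; ring
  have hrem : 0 ≤ (A ^ 2 - 24 * A - 48 * c) / (4 * (A + 2 * c)) :=
    div_nonneg (by linarith) (by positivity)
  nlinarith [mul_le_mul_of_nonneg_left hlog hc.le]

/-- `u = A / (A + 2c)` is chosen so that `u (A + c) - u A / 2 = A / 2`: the exploration gain
`u S / K` then beats both the `log C` loss and the Chernoff cost `λ c L` by `5 L`. -/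
lemma chernoff_exponent_le {K A c lam L lC S : ℝ} (hK : 2 ≤ K) (hc : 0 < c) (hA : 0 < A)
    (hlam : c * lam ≤ A / 2 - 6) (hL : 1 ≤ L)
    (hS : K * (A + c) * L - K * (A + c) * lC + K * (A + c) - 2 ≤ S)
    (hB : 2 * ((A + c) * (lC - 1)) ≤ L * A) :
    lam * (c * L) - A / (A + 2 * c) * (S / K) ≤ -(5 * L) := by
  set u := A / (A + 2 * c)
  have hu : u * (A + 2 * c) = A := div_mul_cancel₀ _ (by positivity)
  have hu0 : 0 ≤ u := by positivity
  have hu1 : u ≤ 1 := (div_le_one (by positivity)).mpr (by linarith)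
  have hSK : (A + c) * L - (A + c) * lC + (A + c) - 2 / K ≤ S / K := by
    rw [le_div_iff₀ (by linarith)]
    calc _ = K * (A + c) * L - K * (A + c) * lC + K * (A + c) - 2 := by field_simp
      _ ≤ S := hS
  have hgain : A / 2 * L - 1 ≤ u * (S / K) := by
    have h2K : u * (2 / K) ≤ 1 := by
      rw [mul_div_assoc', div_le_one (by linarith)]; linarith
    nlinarith [mul_le_mul_of_nonneg_left hSK hu0, mul_le_mul_of_nonneg_left hB hu0]
  nlinarith [mul_le_mul_of_nonneg_right hlam (show 0 ≤ L by linarith)]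

lemma exists_chernoff_parameter {K c₁ C : ℝ} {t : ℕ} (hK : 2 ≤ K) (hc₁ : 0 < c₁)
    (hC : K * (c₁ + 40 * K) + 4 * K * Real.sqrt (5 * K * (c₁ + 20 * K)) ≤ C)
    (ht : max (max (C + 1) 2) (Real.exp (2 * (C / K * (Real.log C - 1)) / (C / K - c₁))) < t) :
    ∃ lam, 0 ≤ lam ∧ lam * (c₁ * Real.log t)
      - (1 - Real.exp (-lam)) * ((∑ s ∈ Finset.Icc 1 t, eps C s) / K) ≤ -(5 * Real.log t) := by
  simp only [max_lt_iff] at ht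
  obtain ⟨⟨htC, ht2⟩, htB⟩ := ht
  obtain ⟨hA80, hAsq⟩ := policy_constant_bounds hK hc₁ hC
  set A := C / K - c₁ with hA
  have hAc : C / K = A + c₁ := by rw [hA]; ring
  have hCA : C = K * (A + c₁) := by rw [← hAc]; field_simp
  have hCpos : 0 < C := by rw [hCA]; positivity
  have hL : 1 ≤ Real.log t := by
    rw [Real.le_log_iff_exp_le (by linarith)]
    have : (3 : ℝ) ≤ t := by exact_mod_cast (show 2 < t by exact_mod_cast ht2)
    linarith [Real.exp_one_lt_d9]
  have hB : 2 * ((A + c₁) * (Real.log C - 1)) ≤ Real.log t * A := by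
    rw [← div_le_iff₀ (by linarith), Real.le_log_iff_exp_le (by linarith), ← hAc]
    exact htB.le
  refine ⟨Real.log ((A + 2 * c₁) / (2 * c₁)),
    Real.log_nonneg ((le_div_iff₀ (by positivity)).mpr (by linarith)), ?_⟩
  rw [Real.exp_neg, Real.exp_log (by positivity),
    show 1 - ((A + 2 * c₁) / (2 * c₁))⁻¹ = A / (A + 2 * c₁) by field_simp; ring]
  exact chernoff_exponent_le hK hc₁ (by linarith) (mul_log_le_half_sub_six hc₁ (by linarith) hAsq)
    hL (by rw [← hCA]; exact sum_eps_ge hCpos htC) hB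

theorem statement5_general
    {Ω : Type*} [mΩ : MeasurableSpace Ω]
    (P : Measure Ω) [IsProbabilityMeasure P]
    (K : ℕ) (hK : 2 ≤ K)
    (ℱ : Filtration ℕ mΩ)
    (δ : ℕ → Ω → Fin K)
    (hδ : ∀ t k, MeasurableSet[ℱ t] {ω | δ t ω = k})
    -- arbitrary F_{t}-measurable scores
    (score : Fin K → ℕ → Ω → ℝ)
    (c₁ C : ℝ) (hc1 : 0 < c₁)
    (hC : K * (c₁ + 40 * K) + 4 * K * Real.sqrt (5 * K * (c₁ + 20 * K)) ≤ C)
    (hpolicy : ∀ t, 1 ≤ t → ∀ k : Fin K,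
      (P[fun ω => indi (δ t ω = k)|ℱ (t - 1)]) =ᵐ[P]
        fun ω => (1 - eps C t) * indi (∀ m, score m (t - 1) ω ≤ score k (t - 1) ω)
          + eps C t / K) :
    ∀ k : Fin K, ∀ t : ℕ,
      max (max (C + 1) 2)
        (Real.exp (2 * (C / K * (Real.log C - 1)) / (C / K - c₁))) < (t : ℝ) →
      P {ω | Ncount δ k t ω < c₁ * Real.log t} ≤ ENNReal.ofReal (2 / (t : ℝ) ^ 5) := by
  intro k t ht
  have hK2 : (2 : ℝ) ≤ K := by exact_mod_cast hK
  obtain ⟨lam, hlam0, hexponent⟩ := exists_chernoff_parameter hK2 hc1 hC ht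
  have ht0 : (0 : ℝ) < t := two_pos.trans (((le_max_right _ _).trans (le_max_left _ _)).trans_lt ht)
  have hq : ∀ n, ∀ᵐ ω ∂P, eps C (n + 1) / K ≤ P[fun ω => indi (δ (n + 1) ω = k)|ℱ n] ω := by
    intro n
    filter_upwards [hpolicy (n + 1) (Nat.le_add_left 1 n) k] with ω hω
    rw [Nat.add_sub_cancel] at hω
    rw [hω]
    nlinarith [eps_le_one (C := C) (n + 1), indi_nonneg (∀ m, score m n ω ≤ score k n ω)]
  have hchernoff := measureReal_sum_le_le_exp ℱ (fun s => stronglyMeasurable_indi (hδ s k))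
    (fun s ω => indi_eq_zero_or_one _)
    (fun s => (div_le_one (by linarith)).mpr ((eps_le_one s).trans (by linarith))) hq hlam0
    (c₁ * Real.log t) t
  rw [← Finset.sum_div] at hchernoff
  calc P {ω | Ncount δ k t ω < c₁ * Real.log t}
      ≤ P {ω | Ncount δ k t ω ≤ c₁ * Real.log t} :=
        measure_mono (Set.ofPred_subset_ofPred.mpr fun ω => le_of_lt)
    _ = ENNReal.ofReal (P.real {ω | Ncount δ k t ω ≤ c₁ * Real.log t}) :=
        (ofReal_measureReal (measure_ne_top _ _)).symm
    _ ≤ ENNReal.ofReal (Real.exp (-(5 * Real.log t))) :=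
        ENNReal.ofReal_le_ofReal (hchernoff.trans (Real.exp_le_exp.mpr hexponent))
    _ ≤ ENNReal.ofReal (2 / (t : ℝ) ^ 5) := by
        refine ENNReal.ofReal_le_ofReal ?_
        rw [Real.exp_neg, show 5 * Real.log t = Real.log ((t : ℝ) ^ 5) by norm_num [Real.log_pow],
          Real.exp_log (pow_pos ht0 5), inv_eq_one_div]
        gcongr; norm_num

/-- Each data source is sampled `Ω(log t)` times. -/
theorem statement5
    {Ω 𝒳 : Type*} [mΩ : MeasurableSpace Ω] [m𝒳 : MeasurableSpace 𝒳]
    (P : Measure Ω) [IsProbabilityMeasure P]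
    (K : ℕ) (hK : 2 ≤ K)
    (ℱ : Filtration ℕ mΩ)
    (δ : ℕ → Ω → Fin K)
    (hδ : ∀ t k, MeasurableSet[ℱ t] {ω | δ t ω = k})
    -- arbitrary F_{t}-measurable scores
    (score : Fin K → ℕ → Ω → ℝ)
    (hscore : ∀ k t, Measurable[ℱ t] (score k t))
    (c₁ C : ℝ) (hc1 : 0 < c₁)
    (hC : K * (c₁ + 40 * K) + 4 * K * Real.sqrt (5 * K * (c₁ + 20 * K)) ≤ C)
    (hpolicy : ∀ t, 1 ≤ t → ∀ k : Fin K,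
      (P[fun ω => indi (δ t ω = k)|ℱ (t - 1)]) =ᵐ[P]
        fun ω => (1 - eps C t) * indi (∀ m, score m (t - 1) ω ≤ score k (t - 1) ω)
          + eps C t / K) :
    ∀ k : Fin K, ∀ t : ℕ,
      max (max (C + 1) 2)
        (Real.exp (2 * (C / K * (Real.log C - 1)) / (C / K - c₁))) < (t : ℝ) →
      P {ω | Ncount δ k t ω < c₁ * Real.log t} ≤ ENNReal.ofReal (2 / (t : ℝ) ^ 5) :=
  statement5_general (mΩ := mΩ) P K hK ℱ δ hδ score c₁ C hc1 hC hpolicy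

end ASN2T
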